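/- Let G : [0,1] → [0,1] be a measurable function satisfying G(z) = (1 + z·G(G(z))) / 2 for every z ∈ [0,1]. Then for every z ∈ [0,1], G(z) = (−z² + 10z − 3 + √(25−z)·(1−z)^{3/2}) / (2(z+2)). -/

import Mathlib

/-!
Along an orbit `zₙ = Gⁿ z` the functional equation reads `zₙ zₙ₊₂ = 2 zₙ₊₁ - 1`. If two solutions
differ by `ε > 0` at `z`, subtracting their recurrences shows that the gap between the two orbits
grows by at least `ε` at every step, which is impossible inside `[0,1]`. So there is at most one
solution.

The explicit `g₄ x` is the larger root `w` of `(x+2)w² + (x²-10x+3)w + (x+2)(2x-1)`. This polynomial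
is symmetric in `x` and `w`, so when `g4Poly x w = 0` the roots of `v ↦ g4Poly w v` are `x` and
`(2w-1)/x` (Vieta): the curve `g4Poly = 0` is invariant under `(x, w) ↦ (w, (2w-1)/x)`.
Since `g₄ x ≥ (1+x²)/2`, the root `(2w-1)/x` is the larger one, which is the functional equation
`x g₄(g₄ x) = 2 g₄ x - 1`.
-/

namespace VEP

open Set

def IsG4Solution (G : Icc (0 : ℝ) 1 → Icc (0 : ℝ) 1) : Prop :=
  ∀ z, (G z : ℝ) = (1 + z * G (G z)) / 2

theorem le_of_recurrence {g h : ℕ → ℝ} (hg : ∀ n, g n ∈ Icc (0 : ℝ) 1)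
    (hh : ∀ n, h n ∈ Icc (0 : ℝ) 1)
    (hg_rec : ∀ n, g n * g (n + 2) = 2 * g (n + 1) - 1)
    (hh_rec : ∀ n, h n * h (n + 2) = 2 * h (n + 1) - 1) (h₀ : g 0 = h 0) :
    g 1 ≤ h 1 := by
  by_contra! hlt
  set d : ℕ → ℝ := fun n => g n - h n
  set ε := d 1
  have hε : 0 < ε := sub_pos.mpr hlt
  have hstep : ∀ n, 0 ≤ d n ∧ d n + ε ≤ d (n + 1) := by
    intro n
    induction n with
    | zero => simp [d, ε, h₀]
    | succ n ih =>
      obtain ⟨hdn, hgrow⟩ := ih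
      have hdiff : g n * d (n + 2) = 2 * d (n + 1) - h (n + 2) * d n := by
        simp only [d]; linear_combination hg_rec n - hh_rec n
      have : d (n + 1) + ε ≤ g n * d (n + 2) := by
        nlinarith [(hh (n + 2)).2]
      have : 0 < d (n + 2) := pos_of_mul_pos_right (by linarith) (hg n).1
      exact ⟨by linarith, by nlinarith [(hg n).2]⟩
  have hlinear : ∀ n : ℕ, n * ε ≤ d n := by
    intro n
    induction n with
    | zero => simp [d, h₀]
    | succ n ih => push_cast; linarith [(hstep n).2]
  obtain ⟨n, hn⟩ := exists_nat_gt (1 / ε)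
  have : d n ≤ 1 := by linarith [(hg n).2, (hh n).1]
  have : 1 < n * ε := by rwa [div_lt_iff₀ hε] at hn
  linarith [hlinear n]

theorem iterate_mul_iterate_add_two {G : Icc (0 : ℝ) 1 → Icc (0 : ℝ) 1}
    (hG : IsG4Solution G) (z : Icc (0 : ℝ) 1) (n : ℕ) :
    (G^[n] z : ℝ) * G^[n + 2] z = 2 * G^[n + 1] z - 1 := by
  rw [Function.iterate_succ_apply', Function.iterate_succ_apply', hG (G^[n] z)]
  ring

theorem apply_le_of_isG4Solution {G F : Icc (0 : ℝ) 1 → Icc (0 : ℝ) 1}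
    (hG : IsG4Solution G) (hF : IsG4Solution F) (z : Icc (0 : ℝ) 1) : (G z : ℝ) ≤ F z :=
  le_of_recurrence (g := fun n => G^[n] z) (h := fun n => F^[n] z)
    (fun n => (G^[n] z).2) (fun n => (F^[n] z).2)
    (iterate_mul_iterate_add_two hG z) (iterate_mul_iterate_add_two hF z) rfl

theorem IsG4Solution.eq {G F : Icc (0 : ℝ) 1 → Icc (0 : ℝ) 1}
    (hG : IsG4Solution G) (hF : IsG4Solution F) : G = F :=
  funext fun z => Subtype.ext <|
    le_antisymm (apply_le_of_isG4Solution hG hF z) (apply_le_of_isG4Solution hF hG z)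

noncomputable def g4 (x : ℝ) : ℝ :=
  (-(x ^ 2 - 10 * x + 3) + √((25 - x) * (1 - x) ^ 3)) / (2 * (x + 2))

def g4Poly (x w : ℝ) : ℝ :=
  (x + 2) * w ^ 2 + (x ^ 2 - 10 * x + 3) * w + (x + 2) * (2 * x - 1)

theorem g4Poly_comm (x w : ℝ) : g4Poly x w = g4Poly w x := by
  unfold g4Poly; ring

theorem sq_mul_g4Poly_div {x : ℝ} (hx : x ≠ 0) (w : ℝ) :
    x ^ 2 * g4Poly w ((2 * w - 1) / x) = (2 * w - 1) * g4Poly x w := by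
  unfold g4Poly; field_simp; ring

theorem four_mul_g4Poly (x w : ℝ) :
    4 * (x + 2) * g4Poly x w
      = (2 * (x + 2) * w + (x ^ 2 - 10 * x + 3)) ^ 2 - (25 - x) * (1 - x) ^ 3 := by
  unfold g4Poly; ring

theorem two_mul_mul_g4_add {x : ℝ} (hx : x + 2 ≠ 0) :
    2 * (x + 2) * g4 x + (x ^ 2 - 10 * x + 3) = √((25 - x) * (1 - x) ^ 3) := by
  unfold g4; field_simp; ring

theorem g4_eq_iff {x : ℝ} (hx₁ : x ≤ 1) (hx₂ : x + 2 ≠ 0) (w : ℝ) :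
    g4 x = w ↔ g4Poly x w = 0 ∧ 0 ≤ 2 * (x + 2) * w + (x ^ 2 - 10 * x + 3) := by
  have hx₂' : 4 * (x + 2) ≠ 0 := by simpa using hx₂
  constructor
  · rintro rfl
    have hdisc : 0 ≤ (25 - x) * (1 - x) ^ 3 :=
      mul_nonneg (by linarith) (pow_nonneg (by linarith) 3)
    rw [← mul_eq_zero_iff_left hx₂', four_mul_g4Poly, two_mul_mul_g4_add hx₂,
      Real.sq_sqrt hdisc, sub_self]
    exact ⟨rfl, Real.sqrt_nonneg _⟩
  · rintro ⟨hw, hsign⟩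
    rw [← mul_eq_zero_iff_left hx₂', four_mul_g4Poly, sub_eq_zero] at hw
    have : 2 * (x + 2) * g4 x = 2 * (x + 2) * w := by
      rw [← add_left_inj (x ^ 2 - 10 * x + 3), two_mul_mul_g4_add hx₂, ← hw,
        Real.sqrt_sq hsign]
    exact mul_left_cancel₀ (by simpa using hx₂) this

theorem g4_le_one {x : ℝ} (hx₀ : -2 < x) (hx₁ : x ≤ 1) : g4 x ≤ 1 := by
  have hroot : √((25 - x) * (1 - x) ^ 3) ≤ (1 - x) * (7 - x) := by
    refine Real.sqrt_le_iff.mpr ⟨mul_nonneg (by linarith) (by linarith), ?_⟩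
    nlinarith [mul_nonneg (sq_nonneg (1 - x)) (by linarith : (0 : ℝ) ≤ x + 2)]
  have := two_mul_mul_g4_add (x := x) (by linarith)
  nlinarith

theorem one_add_sq_div_two_le_g4 {x : ℝ} (hx₀ : 0 ≤ x) (hx₁ : x ≤ 1) :
    (1 + x ^ 2) / 2 ≤ g4 x := by
  have hroot : (1 - x) ^ 2 * (x + 5) ≤ √((25 - x) * (1 - x) ^ 3) := by
    refine (Real.le_sqrt (by positivity) (mul_nonneg (by linarith)
      (pow_nonneg (by linarith) 3))).mpr ?_
    nlinarith [mul_nonneg (pow_nonneg (sub_nonneg.mpr hx₁) 3)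
      (mul_nonneg hx₀ (by positivity : (0 : ℝ) ≤ (x + 2) * (x + 7)))]
  have := two_mul_mul_g4_add (x := x) (by linarith)
  nlinarith

theorem g4_mapsTo : MapsTo g4 (Icc 0 1) (Icc 0 1) := fun _ ⟨hx₀, hx₁⟩ =>
  ⟨le_trans (by positivity) (one_add_sq_div_two_le_g4 hx₀ hx₁),
    g4_le_one (by linarith) hx₁⟩

theorem mul_g4_g4 {x : ℝ} (hx₀ : 0 ≤ x) (hx₁ : x ≤ 1) :
    x * g4 (g4 x) = 2 * g4 x - 1 := by
  obtain rfl | hx₀ := hx₀.eq_or_lt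
  · have : g4 0 = 1 / 2 := (g4_eq_iff (by norm_num) (by norm_num) _).mpr
      ⟨by norm_num [g4Poly], by norm_num⟩
    rw [this]; ring
  set w := g4 x
  have ⟨hw₀, hw₁⟩ := g4_mapsTo ⟨hx₀.le, hx₁⟩
  have hw : g4Poly x w = 0 := ((g4_eq_iff hx₁ (by linarith) w).mp rfl).1
  have hlow := one_add_sq_div_two_le_g4 hx₀.le hx₁
  suffices g4 w = (2 * w - 1) / x by rw [this]; field_simp
  refine (g4_eq_iff hw₁ (by linarith) _).mpr ⟨?_, ?_⟩
  · have := sq_mul_g4Poly_div hx₀.ne' w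
    rw [hw, mul_zero] at this
    exact (mul_eq_zero.mp this).resolve_left (by positivity)
  · have hsign : x * (2 * (w + 2) * ((2 * w - 1) / x) + (w ^ 2 - 10 * w + 3))
        = (w + 2) * (2 * w - 1 - x ^ 2) := by
      rw [g4Poly_comm] at hw
      unfold g4Poly at hw
      field_simp
      linear_combination hw
    have : 0 ≤ (w + 2) * (2 * w - 1 - x ^ 2) := mul_nonneg (by linarith) (by linarith)
    rw [← hsign] at this
    exact nonneg_of_mul_nonneg_right this hx₀

noncomputable def g4Icc : Icc (0 : ℝ) 1 → Icc (0 : ℝ) 1 := MapsTo.restrict g4 _ _ g4_mapsTo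

theorem g4Icc_apply (z : Icc (0 : ℝ) 1) : (g4Icc z : ℝ) = g4 z := rfl

theorem isG4Solution_g4Icc : IsG4Solution g4Icc := fun z => by
  simp only [g4Icc_apply]
  linarith [mul_g4_g4 z.2.1 z.2.2]

theorem g4_eq {x : ℝ} (hx : x ≤ 1) :
    g4 x = (-x ^ 2 + 10 * x - 3 + √(25 - x) * (1 - x) ^ ((3 : ℝ) / 2)) / (2 * (x + 2)) := by
  have h3 : (1 - x) ^ ((3 : ℝ) / 2) = √((1 - x) ^ 3) := by
    rw [Real.sqrt_eq_rpow, ← Real.rpow_natCast_mul (by linarith)]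
    norm_num
  rw [g4, h3, ← Real.sqrt_mul (by linarith)]
  ring

theorem g4_uniqueness_general (G : Set.Icc (0 : ℝ) 1 → Set.Icc (0 : ℝ) 1)
    (hfe : ∀ z : Set.Icc (0 : ℝ) 1, (G z : ℝ) = (1 + (z : ℝ) * (G (G z) : ℝ)) / 2) :
    ∀ z : Set.Icc (0 : ℝ) 1,
      (G z : ℝ)
        = (-(z : ℝ) ^ 2 + 10 * (z : ℝ) - 3
            + Real.sqrt (25 - (z : ℝ)) * (1 - (z : ℝ)) ^ ((3 : ℝ) / 2))
          / (2 * ((z : ℝ) + 2)) := by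
  intro z
  rw [IsG4Solution.eq hfe isG4Solution_g4Icc, g4Icc_apply, g4_eq z.2.2]

/-- Uniqueness of the measurable solution on `[0,1]` of the functional equation
`G(z) = (1 + z·G(G(z))) / 2`: any such solution is the explicit function `g₄`. -/
theorem g4_uniqueness (G : Set.Icc (0 : ℝ) 1 → Set.Icc (0 : ℝ) 1) (hG : Measurable G)
    (hfe : ∀ z : Set.Icc (0 : ℝ) 1, (G z : ℝ) = (1 + (z : ℝ) * (G (G z) : ℝ)) / 2) :
    ∀ z : Set.Icc (0 : ℝ) 1,
      (G z : ℝ)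
        = (-(z : ℝ) ^ 2 + 10 * (z : ℝ) - 3
            + Real.sqrt (25 - (z : ℝ)) * (1 - (z : ℝ)) ^ ((3 : ℝ) / 2))
          / (2 * ((z : ℝ) + 2)) :=
  g4_uniqueness_general G hfe

end VEP
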